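/- Let $(n_0, n_1, \ldots, n_N)$ be positive integers with ordered version $\tilde{n}_0 \le \cdots \le \tilde{n}_N$, and suppose $N \ge 2$ and $\tilde{n}_1 = \tilde{n}_2 = \cdots = \tilde{n}_N$. Then the maximum diversity of the amplify-and-forward scheme satisfies $d^{AF}(0) = \sum_{i=1}^{\tilde{n}_0} c_i \ge \frac{\tilde{n}_0(\tilde{n}_1 + 1)}{2}$, where $c_i = 1 - i + \min_{k=1,\ldots,N} \lfloor (\sum_{l=0}^{k} \tilde{n}_l - i)/k \rfloor$. -/

import Mathlib

/-!
Since `ñ₁ = ⋯ = ñ_N`, the `k`-th partial sum is `ñ₀ + k ñ₁`, so every quotient in the minimum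
defining `c_i` is `ñ₁ + ⌊(ñ₀ - i)/k⌋ ≥ ñ₁` for `i ≤ ñ₀`. Hence `c_i ≥ ñ₁ + 1 - i`, and summing this
arithmetic progression gives `ñ₀ (2ñ₁ + 1 - ñ₀)/2`, which is at least `ñ₀ (ñ₁ + 1)/2` as `ñ₀ ≤ ñ₁`.
-/

open Finset

lemma sum_range_succ_eq_of_eq_const {k : ℕ} {n : ℕ → ℤ} {a : ℤ}
    (h : ∀ l, 1 ≤ l → l ≤ k → n l = a) :
    ∑ l ∈ range (k + 1), n l = n 0 + k * a := by
  rw [sum_range_succ',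
    sum_congr rfl fun l hl => h (l + 1) (by omega) (by rw [mem_range] at hl; omega),
    sum_const, card_range, nsmul_eq_mul, add_comm]

lemma Int.le_fdiv_of_mul_le {m k b : ℤ} (hk : 0 < k) (h : b * k ≤ m) : b ≤ m.fdiv k := by
  rw [Int.fdiv_eq_ediv_of_nonneg _ hk.le]
  exact (Int.le_ediv_iff_mul_le hk).2 h

lemma two_mul_sum_Icc_one_sub (b : ℤ) {m : ℤ} (hm : 0 ≤ m) :
    2 * ∑ i ∈ Icc 1 m, (b + 1 - i) = m * (2 * b + 1 - m) := by
  induction m, hm using Int.leInduction with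
  | base => simp
  | succ m hm ih =>
    rw [← insert_Icc_right_eq_Icc_add_one (by omega), sum_insert (by simp), mul_add, ih]
    ring

/-- Lower bound on the maximum diversity of the AF scheme: if
`ñ₁ = ñ₂ = ⋯ = ñ_N` (and `N ≥ 2`), then `∑_{i=1}^{ñ₀} c_i ≥ ñ₀(ñ₁+1)/2`. -/
theorem af_max_diversity_lower (N : ℕ) (hN : 2 ≤ N) (n : ℕ → ℤ)
    (hpos : ∀ l, l ≤ N → 0 < n l)
    (hmono : ∀ l, l < N → n l ≤ n (l + 1))
    (heq : ∀ l, 1 ≤ l → l ≤ N → n l = n 1)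
    (c : ℤ → ℤ)
    (hc : ∀ i : ℤ, c i = 1 - i +
      (Finset.Icc 1 N).inf' (Finset.nonempty_Icc.mpr (by omega))
        (fun k => Int.fdiv ((∑ l ∈ Finset.range (k + 1), n l) - i) (k : ℤ))) :
    ((n 0 : ℚ) * (n 1 + 1)) / 2 ≤ ((∑ i ∈ Finset.Icc (1 : ℤ) (n 0), c i : ℤ) : ℚ) := by
  have hn0 : 0 < n 0 := hpos 0 (by omega)
  have hn01 : n 0 ≤ n 1 := hmono 0 (by omega)
  have hc_ge : ∀ i ∈ Icc 1 (n 0), n 1 + 1 - i ≤ c i := by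
    intro i hi
    rw [mem_Icc] at hi
    suffices n 1 ≤ (Icc 1 N).inf' (nonempty_Icc.mpr (by omega))
        (fun k => Int.fdiv ((∑ l ∈ range (k + 1), n l) - i) (k : ℤ)) by rw [hc i]; omega
    refine le_inf' _ _ fun k hk => ?_
    rw [mem_Icc] at hk
    rw [sum_range_succ_eq_of_eq_const fun l h1 h2 => heq l h1 (h2.trans hk.2)]
    exact Int.le_fdiv_of_mul_le (by exact_mod_cast hk.1) (by linarith)
  have h2sum : n 0 * (n 1 + 1) ≤ 2 * ∑ i ∈ Icc 1 (n 0), c i :=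
    calc n 0 * (n 1 + 1) ≤ n 0 * (2 * n 1 + 1 - n 0) := by nlinarith
      _ = 2 * ∑ i ∈ Icc 1 (n 0), (n 1 + 1 - i) := (two_mul_sum_Icc_one_sub _ hn0.le).symm
      _ ≤ 2 * ∑ i ∈ Icc 1 (n 0), c i := by gcongr with i hi; exact hc_ge i hi
  rw [div_le_iff₀ two_pos]
  exact_mod_cast (by linarith : n 0 * (n 1 + 1) ≤ (∑ i ∈ Icc 1 (n 0), c i) * 2)
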